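/- arXiv:0706.2431 — 4 statements merged into one kernel-verified Lean document; each statement's English description precedes it below -/
import Mathlib

section
/- Let G be a complete multipartite graph. For any binary vertex labeling, if d_P denotes (number of 0-labeled vertices minus number of 1-labeled vertices) in part P, then the difference between the number of 0-labeled edges and 1-labeled edges of G equals the sum over unordered pairs of distinct parts {P,Q} of d_P·d_Q, which equals (1/2)·((Σ_P d_P)² - Σ_P d_P²). -/
open Finset

/-- Number of edges of `G` whose induced label (mod-2 sum of endpoint labels) is `c`. -/
def edgeCount {V : Type*} [Fintype V] [DecidableEq V] (G : SimpleGraph V)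
    [DecidableRel G.Adj] (f : V → ZMod 2) (c : ZMod 2) : ℕ :=
  (G.edgeFinset.filter fun e =>
    Sym2.lift ⟨fun a b => f a + f b, fun _ _ => add_comm _ _⟩ e = c).card

instance {ι : Type*} [DecidableEq ι] (V : ι → Type*) :
    DecidableRel (SimpleGraph.completeMultipartiteGraph V).Adj :=
  fun v w => inferInstanceAs (Decidable (v.1 ≠ w.1))

/-!
Replace each label `x : ZMod 2` by the sign `(-1) ^ x`. Signs turn label sums into products, so
the label of an edge `uv` has sign `σ u * σ v` and the difference of the two edge counts is
`∑ σ u * σ v` over the edges. Doubling it counts ordered pairs of vertices in distinct parts,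
and this sum factors through the part sums `d i = ∑_{v ∈ V i} σ v`.
-/

theorem sum_neg_one_uzpow_eq_card_sub_card {α : Type*} (s : Finset α) (g : α → ZMod 2) :
    ∑ a ∈ s, (((-1 : ℤˣ) ^ g a : ℤˣ) : ℤ) = #{a ∈ s | g a = 0} - #{a ∈ s | g a = 1} := by
  have h : ∀ x : ZMod 2,
      (((-1 : ℤˣ) ^ x : ℤˣ) : ℤ) = (if x = 0 then 1 else 0) - (if x = 1 then 1 else 0) := by
    decide
  simp only [h, sum_sub_distrib, sum_boole]

theorem sum_sum_sdiff_singleton_mul {ι R : Type*} [Fintype ι] [DecidableEq ι] [CommRing R]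
    (a : ι → R) : ∑ i, ∑ j ∈ univ \ {i}, a i * a j = (∑ i, a i) ^ 2 - ∑ i, a i ^ 2 := by
  simp only [sum_sdiff_eq_sub (subset_univ _), sum_singleton, sum_sub_distrib, ← sum_mul_sum, sq]

namespace SimpleGraph

variable {V M : Type*} [Fintype V] [AddCommMonoid M] (G : SimpleGraph V) [DecidableRel G.Adj]

theorem sum_darts_eq_sum_sum_adj (g : V → V → M) :
    ∑ d : G.Dart, g d.fst d.snd = ∑ v, ∑ w with G.Adj v w, g v w := by
  rw [← sum_finset_product' {p : V × V | G.Adj p.1 p.2} _ _ (by simp)]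
  exact sum_bij' (fun d _ ↦ d.toProd) (fun p hp ↦ ⟨p, (mem_filter.1 hp).2⟩)
    (by simp) (by simp) (by simp) (by simp) (by simp)

variable [DecidableEq V]

theorem sum_darts_edge_eq_two_nsmul (F : Sym2 V → M) :
    ∑ d : G.Dart, F d.edge = 2 • ∑ e ∈ G.edgeFinset, F e := by
  rw [← sum_fiberwise_of_maps_to (g := Dart.edge) (t := G.edgeFinset)
    (fun d _ ↦ G.mem_edgeFinset.2 d.edge_mem), smul_sum]
  refine sum_congr rfl fun e he ↦ ?_
  rw [sum_congr rfl fun d hd ↦ congrArg F (mem_filter.1 hd).2, sum_const,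
    G.dart_edge_fiber_card e (G.mem_edgeFinset.1 he)]

theorem two_nsmul_sum_edgeFinset (F : Sym2 V → M) :
    2 • ∑ e ∈ G.edgeFinset, F e = ∑ v, ∑ w with G.Adj v w, F s(v, w) := by
  rw [← sum_darts_edge_eq_two_nsmul, ← sum_darts_eq_sum_sum_adj]
  rfl

end SimpleGraph

theorem SimpleGraph.completeMultipartiteGraph_sum_sum_adj_mul {ι R : Type*} [Fintype ι]
    [DecidableEq ι] [CommSemiring R] (V : ι → Type*) [∀ i, Fintype (V i)]
    (g : (Σ i, V i) → R) :
    ∑ v, ∑ w with (completeMultipartiteGraph V).Adj v w, g v * g w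
      = ∑ i, ∑ j ∈ univ \ {i}, (∑ x, g ⟨i, x⟩) * ∑ y, g ⟨j, y⟩ := by
  have hnbr : ∀ v : Σ i, V i, ({w | (completeMultipartiteGraph V).Adj v w} : Finset _)
      = (univ \ {v.1}).sigma fun _ ↦ univ := by
    intro v
    ext w
    simp [eq_comm]
  simp_rw [← mul_sum, hnbr, sum_sigma, ← univ_sigma_univ, sum_sigma, ← sum_mul]

theorem complete_multipartite_edge_label_difference
    {ι : Type*} [Fintype ι] [DecidableEq ι] (V : ι → Type*)
    [∀ i, Fintype (V i)] [∀ i, DecidableEq (V i)]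
    (f : (Σ i, V i) → ZMod 2) (d : ι → ℤ)
    (hd : ∀ i, d i = ((Finset.univ.filter fun v : V i => f ⟨i, v⟩ = 0).card : ℤ)
        - ((Finset.univ.filter fun v : V i => f ⟨i, v⟩ = 1).card : ℤ)) :
    2 * ((edgeCount (SimpleGraph.completeMultipartiteGraph V) f 0 : ℤ)
        - (edgeCount (SimpleGraph.completeMultipartiteGraph V) f 1 : ℤ))
      = ∑ i, ∑ j ∈ Finset.univ \ {i}, d i * d j ∧
    2 * ((edgeCount (SimpleGraph.completeMultipartiteGraph V) f 0 : ℤ)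
        - (edgeCount (SimpleGraph.completeMultipartiteGraph V) f 1 : ℤ))
      = (∑ i, d i) ^ 2 - ∑ i, (d i) ^ 2 := by
  have hd_sign : ∀ i, d i = ∑ x, (((-1 : ℤˣ) ^ f ⟨i, x⟩ : ℤˣ) : ℤ) := fun i ↦
    (hd i).trans (sum_neg_one_uzpow_eq_card_sub_card _ _).symm
  have hpairs : 2 * ((edgeCount (SimpleGraph.completeMultipartiteGraph V) f 0 : ℤ)
      - edgeCount (SimpleGraph.completeMultipartiteGraph V) f 1)
        = ∑ i, ∑ j ∈ univ \ {i}, d i * d j := by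
    rw [edgeCount, edgeCount, ← sum_neg_one_uzpow_eq_card_sub_card, two_mul, ← two_nsmul,
      SimpleGraph.two_nsmul_sum_edgeFinset]
    simp only [Sym2.lift_mk, uzpow_add, Units.val_mul,
      SimpleGraph.completeMultipartiteGraph_sum_sum_adj_mul, hd_sign]
  exact ⟨hpairs, hpairs.trans (sum_sum_sdiff_singleton_mul d)⟩
end

section
/- The cordial edge deficiency of the complete multipartite graph with k odd parts equals max{0, ⌊k/2⌋ - 1}. In particular, the complete multipartite graph is cordial (ced = 0) if and only if k ≤ 3. -/
open Finset

/-- A labeling is friendly if the vertex label counts differ by at most 1. -/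
def Friendly {V : Type*} [Fintype V] (f : V → ZMod 2) : Prop :=
  |((Finset.univ.filter fun v => f v = 0).card : ℤ)
    - ((Finset.univ.filter fun v => f v = 1).card : ℤ)| ≤ 1

/-!
Encode a labeling by spins `σ v = ±1` (`spin`); an edge then has label `0` iff `σ u σ v = 1`,
so the edge imbalance `e₀ - e₁` is `∑_{uv ∈ E} σ u σ v`. For the complete multipartite graph
with part sums `tᵢ` and `T = ∑ tᵢ` this is `(T² - ∑ tᵢ²) / 2`. Friendliness says `|T| ≤ 1`, and
`tᵢ` has the parity of `|Vᵢ|`, so every odd part has `tᵢ² ≥ 1` and `T ≡ k (mod 2)`; hence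
`|e₀ - e₁| ≥ ⌊k/2⌋`. Equality is attained with `tᵢ = 0` on even parts and `tᵢ = ±1` on odd
parts, the signs balanced so that `T = k mod 2`.
-/

def spin (x : ZMod 2) : ℤ := if x = 0 then 1 else -1

lemma spin_add (a b : ZMod 2) : spin (a + b) = spin a * spin b := by
  revert a b; decide

lemma spin_eq_one_or_eq_neg_one (x : ZMod 2) : spin x = 1 ∨ spin x = -1 := by
  revert x; decide

lemma spin_sq (x : ZMod 2) : spin x ^ 2 = 1 := by
  revert x; decide

lemma spin_eq_ite_sub_ite (x : ZMod 2) :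
    spin x = (if x = 0 then 1 else 0) - (if x = 1 then 1 else 0) := by
  revert x; decide

section SumSpin

variable {α : Type*} (s : Finset α) (g : α → ZMod 2)

lemma sum_spin_eq_card_sub_card :
    ∑ x ∈ s, spin (g x) = (#{x ∈ s | g x = 0} : ℤ) - #{x ∈ s | g x = 1} := by
  simp only [spin_eq_ite_sub_ite, Finset.sum_sub_distrib, Finset.natCast_card_filter]

lemma odd_sum_spin_iff : Odd (∑ x ∈ s, spin (g x)) ↔ Odd #s := by
  have h : Even (∑ x ∈ s, spin (g x) - #s) := by
    rw [Finset.cast_card, ← Finset.sum_sub_distrib]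
    refine Finset.even_sum _ fun x _ => ?_
    rcases spin_eq_one_or_eq_neg_one (g x) with h | h <;> rw [h] <;> decide
  rw [← Int.odd_coe_nat, ← Int.not_even_iff_odd, ← Int.not_even_iff_odd, not_iff_not]
  exact Int.even_sub.mp h

lemma exists_sum_spin_eq (d : ℤ) (hd : |d| ≤ #s) (hpar : Even (d + #s)) :
    ∃ g : α → ZMod 2, ∑ x ∈ s, spin (g x) = d := by
  classical
  obtain ⟨hd₁, hd₂⟩ := abs_le.mp hd
  obtain ⟨A, hAs, hA⟩ := s.exists_subset_card_eq (n := ((d + #s) / 2).toNat) (by omega)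
  refine ⟨fun x => if x ∈ A then 0 else 1, ?_⟩
  have hzero : #{x ∈ s | (if x ∈ A then 0 else 1 : ZMod 2) = 0} = #A := by
    rw [Finset.filter_congr (q := (· ∈ A)) (by intro x _; split_ifs <;> simp_all),
      Finset.filter_mem_eq_inter, Finset.inter_eq_right.mpr hAs]
  have hone : #{x ∈ s | (if x ∈ A then 0 else 1 : ZMod 2) = 1} = #s - #A := by
    rw [Finset.filter_congr (q := (· ∉ A)) (by intro x _; split_ifs <;> simp_all),
      Finset.filter_notMem_eq_sdiff, Finset.card_sdiff_of_subset hAs]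
  rw [sum_spin_eq_card_sub_card, hzero, hone, Nat.cast_sub (Finset.card_le_card hAs), hA]
  obtain ⟨m, hm⟩ := hpar
  omega

end SumSpin

namespace SimpleGraph

variable {V : Type*} [Fintype V] (G : SimpleGraph V) [DecidableRel G.Adj]

lemma sum_dart_edge {M : Type*} [AddCommMonoid M] (g : Sym2 V → M) :
    ∑ d : G.Dart, g d.edge = 2 • ∑ e ∈ G.edgeFinset, g e := by
  classical
  rw [← Finset.sum_fiberwise_of_maps_to' (g := Dart.edge) (t := G.edgeFinset) (by simp),
    Finset.smul_sum]
  refine Finset.sum_congr rfl fun e he => ?_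
  rw [Finset.sum_const, G.dart_edge_fiber_card e (G.mem_edgeFinset.mp he)]

lemma sum_adj_eq_two_nsmul_sum_edgeFinset {M : Type*} [AddCommMonoid M] (g : Sym2 V → M) :
    ∑ x, ∑ y, (if G.Adj x y then g s(x, y) else 0) = 2 • ∑ e ∈ G.edgeFinset, g e := by
  rw [← G.sum_dart_edge, ← Fintype.sum_prod_type', ← Finset.sum_filter]
  exact Finset.sum_bij' (fun p hp => ⟨p, (Finset.mem_filter.mp hp).2⟩)
    (fun d _ => (d.fst, d.snd)) (by simp) (by simp) (by simp) (by simp) (by simp)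

end SimpleGraph

lemma two_mul_edgeCount_sub_edgeCount {V : Type*} [Fintype V] [DecidableEq V] (G : SimpleGraph V)
    [DecidableRel G.Adj] (f : V → ZMod 2) :
    2 * ((edgeCount G f 0 : ℤ) - edgeCount G f 1) =
      ∑ x, ∑ y, if G.Adj x y then spin (f x) * spin (f y) else 0 := by
  have h := G.sum_adj_eq_two_nsmul_sum_edgeFinset
    fun e => spin (Sym2.lift ⟨fun a b => f a + f b, fun _ _ => add_comm _ _⟩ e)
  simp only [Sym2.lift_mk, spin_add, nsmul_eq_mul, Nat.cast_ofNat] at h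
  rw [h, edgeCount, edgeCount, sum_spin_eq_card_sub_card]

lemma friendly_iff_abs_sum_spin_le_one {V : Type*} [Fintype V] (f : V → ZMod 2) :
    Friendly f ↔ |∑ v, spin (f v)| ≤ 1 := by
  rw [Friendly, sum_spin_eq_card_sub_card]

lemma two_mul_card_odd_div_two_le {ι : Type*} [Fintype ι] (t : ι → ℤ)
    (ht : |∑ i, t i| ≤ 1) :
    2 * ((#{i | Odd (t i)} / 2 : ℕ) : ℤ) ≤ ∑ i, t i ^ 2 - (∑ i, t i) ^ 2 := by
  have hsq : (#{i | Odd (t i)} : ℤ) ≤ ∑ i, t i ^ 2 := by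
    calc (#{i | Odd (t i)} : ℤ) = ∑ i with Odd (t i), 1 := by simp
      _ ≤ ∑ i with Odd (t i), t i ^ 2 := Finset.sum_le_sum fun i hi => by
        have hne : t i ≠ 0 := by rintro h; simpa [h] using (Finset.mem_filter.mp hi).2
        exact (one_le_sq_iff_one_le_abs _).mpr (Int.one_le_abs hne)
      _ ≤ ∑ i, t i ^ 2 := Finset.sum_le_sum_of_subset_of_nonneg (Finset.filter_subset _ _)
        fun i _ _ => sq_nonneg (t i)
  have hpar : Even (∑ i, t i - #{i | Odd (t i)}) := by
    rw [Finset.natCast_card_filter, ← Finset.sum_sub_distrib]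
    refine Finset.even_sum _ fun i _ => ?_
    split_ifs with h
    · exact h.sub_odd odd_one
    · simpa using Int.not_odd_iff_even.mp h
  obtain ⟨m, hm⟩ := hpar
  obtain ⟨hlo, hhi⟩ := abs_le.mp ht
  have hT : ∑ i, t i = -1 ∨ ∑ i, t i = 0 ∨ ∑ i, t i = 1 := by omega
  rcases hT with hT | hT | hT <;> rw [hT] at hm ⊢ <;> omega

section CompleteMultipartite

variable {ι : Type*} [Fintype ι] [DecidableEq ι] {V : ι → Type*} [∀ i, Fintype (V i)]

lemma sum_sum_ite_fst_ne_mul {R : Type*} [CommRing R] (a : (Σ i, V i) → R) :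
    ∑ x, ∑ y, (if x.1 ≠ y.1 then a x * a y else 0) =
      (∑ i, ∑ v, a ⟨i, v⟩) ^ 2 - ∑ i, (∑ v, a ⟨i, v⟩) ^ 2 := by
  have hsplit : ∀ x y : Σ i, V i,
      (if x.1 ≠ y.1 then a x * a y else 0) = a x * a y - if x.1 = y.1 then a x * a y else 0 := by
    intro x y; split_ifs <;> simp_all
  simp only [hsplit, Finset.sum_sub_distrib]
  congr 1
  · rw [← Fintype.sum_sigma, sq, Finset.sum_mul_sum]
  · rw [Fintype.sum_sigma]
    refine Finset.sum_congr rfl fun i _ => ?_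
    rw [sq, Finset.sum_mul_sum]
    refine Finset.sum_congr rfl fun v _ => ?_
    rw [Fintype.sum_sigma, Finset.sum_eq_single i (fun j _ hj => by simp [Ne.symm hj]) (by simp)]
    simp

variable [∀ i, DecidableEq (V i)]

lemma two_mul_edgeCount_sub_edgeCount_completeMultipartiteGraph (f : (Σ i, V i) → ZMod 2) :
    2 * ((edgeCount (SimpleGraph.completeMultipartiteGraph V) f 0 : ℤ)
        - edgeCount (SimpleGraph.completeMultipartiteGraph V) f 1) =
      (∑ i, ∑ v, spin (f ⟨i, v⟩)) ^ 2 - ∑ i, (∑ v, spin (f ⟨i, v⟩)) ^ 2 := by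
  rw [two_mul_edgeCount_sub_edgeCount]
  exact sum_sum_ite_fst_ne_mul fun x => spin (f x)

lemma card_odd_div_two_le_natAbs_edgeCount_sub (f : (Σ i, V i) → ZMod 2) (hf : Friendly f) :
    #{i | Odd (Fintype.card (V i))} / 2 ≤
      ((edgeCount (SimpleGraph.completeMultipartiteGraph V) f 0 : ℤ)
        - edgeCount (SimpleGraph.completeMultipartiteGraph V) f 1).natAbs := by
  have ht : |∑ i, ∑ v, spin (f ⟨i, v⟩)| ≤ 1 := by
    simpa only [Fintype.sum_sigma] using (friendly_iff_abs_sum_spin_le_one f).mp hf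
  have hodd : #{i | Odd (∑ v, spin (f ⟨i, v⟩))} = #{i | Odd (Fintype.card (V i))} := by
    simp only [odd_sum_spin_iff, Finset.card_univ]
  have hlow := two_mul_card_odd_div_two_le _ ht
  have hD := two_mul_edgeCount_sub_edgeCount_completeMultipartiteGraph f
  omega

lemma exists_friendly_natAbs_edgeCount_sub_eq :
    ∃ f : (Σ i, V i) → ZMod 2, Friendly f ∧
      ((edgeCount (SimpleGraph.completeMultipartiteGraph V) f 0 : ℤ)
        - edgeCount (SimpleGraph.completeMultipartiteGraph V) f 1).natAbs =
      #{i | Odd (Fintype.card (V i))} / 2 := by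
  set O : Finset ι := {i | Odd (Fintype.card (V i))}
  obtain ⟨ε, hε⟩ := exists_sum_spin_eq O ((#O : ℤ) % 2) (by rw [abs_le]; omega)
    (by rw [Int.even_iff]; omega)
  set d : ι → ℤ := fun i => if i ∈ O then spin (ε i) else 0
  have hd : ∀ i, |d i| ≤ Fintype.card (V i) ∧ Even (d i + Fintype.card (V i)) := by
    intro i
    by_cases hi : i ∈ O
    · have hc : Fintype.card (V i) % 2 = 1 := Nat.odd_iff.mp (Finset.mem_filter.mp hi).2
      rcases spin_eq_one_or_eq_neg_one (ε i) with hs | hs <;>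
        simp only [d, if_pos hi, hs, abs_le, Int.even_iff] <;> omega
    · have hc : Fintype.card (V i) % 2 = 0 :=
        Nat.even_iff.mp (Nat.not_odd_iff_even.mp fun hodd => hi (by simp [O, hodd]))
      simp only [d, if_neg hi, abs_zero, zero_add, Int.even_iff]
      omega
  choose g hg using fun i => exists_sum_spin_eq (Finset.univ : Finset (V i)) (d i) (hd i).1
    (hd i).2
  have hT : ∑ i, d i = #O % 2 := by
    rw [← hε, ← Fintype.sum_ite_mem O]
  have hQ : ∑ i, d i ^ 2 = #O := by
    rw [Finset.cast_card, ← Fintype.sum_ite_mem O]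
    refine Finset.sum_congr rfl fun i _ => ?_
    split_ifs <;> simp [d, *, spin_sq]
  have hsq : ((#O : ℤ) % 2) ^ 2 = (#O : ℤ) % 2 := by
    rcases Int.emod_two_eq_zero_or_one (#O : ℤ) with hO | hO <;> rw [hO] <;> norm_num
  have hD := two_mul_edgeCount_sub_edgeCount_completeMultipartiteGraph fun x => g x.1 x.2
  simp only [hg, hT, hQ, hsq] at hD
  refine ⟨fun x => g x.1 x.2, ?_, by omega⟩
  rw [friendly_iff_abs_sum_spin_le_one, Fintype.sum_sigma]
  simp only [hg, hT, abs_le]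
  omega

end CompleteMultipartite

theorem ced_complete_multipartite_general
    {ι : Type*} [Fintype ι] [DecidableEq ι] (V : ι → Type*)
    [∀ i, Fintype (V i)] [∀ i, DecidableEq (V i)]
    (k : ℕ) (hk : k = (Finset.univ.filter fun i => Odd (Fintype.card (V i))).card) :
    sInf {n : ℕ | ∃ f : (Σ i, V i) → ZMod 2, Friendly f ∧
        n = ((edgeCount (SimpleGraph.completeMultipartiteGraph V) f 0 : ℤ)
          - (edgeCount (SimpleGraph.completeMultipartiteGraph V) f 1 : ℤ)).natAbs - 1}
      = k / 2 - 1 ∧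
    ((∃ f : (Σ i, V i) → ZMod 2, Friendly f ∧
        ((edgeCount (SimpleGraph.completeMultipartiteGraph V) f 0 : ℤ)
          - (edgeCount (SimpleGraph.completeMultipartiteGraph V) f 1 : ℤ)).natAbs ≤ 1)
      ↔ k ≤ 3) := by
  subst hk
  obtain ⟨f₀, hf₀, hD₀⟩ := exists_friendly_natAbs_edgeCount_sub_eq (V := V)
  refine ⟨le_antisymm (Nat.sInf_le ⟨f₀, hf₀, by rw [hD₀]⟩) ?_,
    ⟨?_, fun hk => ⟨f₀, hf₀, by omega⟩⟩⟩
  · refine le_csInf ⟨_, f₀, hf₀, rfl⟩ ?_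
    rintro n ⟨f, hf, rfl⟩
    have := card_odd_div_two_le_natAbs_edgeCount_sub f hf
    omega
  · rintro ⟨f, hf, hD⟩
    have := card_odd_div_two_le_natAbs_edgeCount_sub f hf
    omega

theorem ced_complete_multipartite
    {ι : Type*} [Fintype ι] [DecidableEq ι] (V : ι → Type*)
    [∀ i, Fintype (V i)] [∀ i, DecidableEq (V i)] [∀ i, Nonempty (V i)]
    (k : ℕ) (hk : k = (Finset.univ.filter fun i => Odd (Fintype.card (V i))).card) :
    sInf {n : ℕ | ∃ f : (Σ i, V i) → ZMod 2, Friendly f ∧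
        n = ((edgeCount (SimpleGraph.completeMultipartiteGraph V) f 0 : ℤ)
          - (edgeCount (SimpleGraph.completeMultipartiteGraph V) f 1 : ℤ)).natAbs - 1}
      = k / 2 - 1 ∧
    ((∃ f : (Σ i, V i) → ZMod 2, Friendly f ∧
        ((edgeCount (SimpleGraph.completeMultipartiteGraph V) f 0 : ℤ)
          - (edgeCount (SimpleGraph.completeMultipartiteGraph V) f 1 : ℤ)).natAbs ≤ 1)
      ↔ k ≤ 3) :=
  ced_complete_multipartite_general V k hk
end

section
/- For the complete graph K_n: there exists a binary vertex labeling whose induced edge-label counts (edge label = mod-2 sum of endpoints) differ by at most 1 if and only if n = j² + δ for some nonnegative integer j and δ ∈ {-2, 0, 2}. Equivalently, with z vertices labeled 0 out of n, the difference (#0-edges − #1-edges) = C(z,2) + C(n−z,2) − z(n−z) = ((n−2z)² − n)/2, and this lies in {−1,0,1} for some z iff n or n±2 is a perfect square. -/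
open Finset

instance {V : Type*} [DecidableEq V] : DecidableRel (SimpleGraph.completeGraph V).Adj :=
  fun a b => inferInstanceAs (Decidable (a ≠ b))

/-! With `z` vertices labelled `0` out of `n`, the `1`-edges of `K_n` are exactly the `z (n - z)`
edges across the cut, so together with `#0-edges + #1-edges = C(n,2)` one gets
`2 (#0-edges - #1-edges) = (n - 2z)² - n`. The labelling is balanced iff `n - j² ∈ {-2, 0, 2}` for
`j = |n - 2z|`; conversely every `j ≤ n` of the parity of `n` is such a `|n - 2z|`, and
`n = j², j² ± 2` forces both conditions. -/

namespace ZMod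

lemma two_add_eq_one_iff :
    ∀ x y : ZMod 2, x + y = 1 ↔ (x = 0 ∧ y = 1) ∨ (x = 1 ∧ y = 0) := by decide

end ZMod

lemma Finset.card_filter_eq_zero_add_card_filter_eq_one {α : Type*} [DecidableEq α] (s : Finset α)
    (g : α → ZMod 2) : #{x ∈ s | g x = 0} + #{x ∈ s | g x = 1} = #s := by
  rw [← card_union_of_disjoint (disjoint_filter.2 fun _ _ h₀ h₁ => zero_ne_one (h₀.symm.trans h₁)),
    ← filter_or, filter_true_of_mem fun x _ => (by decide : ∀ y : ZMod 2, y = 0 ∨ y = 1) (g x)]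

section

variable {V : Type*} [Fintype V] [DecidableEq V]

lemma edgeCount_zero_add_edgeCount_one (G : SimpleGraph V) [DecidableRel G.Adj]
    (f : V → ZMod 2) : edgeCount G f 0 + edgeCount G f 1 = #G.edgeFinset :=
  card_filter_eq_zero_add_card_filter_eq_one _ _

lemma edgeCount_completeGraph_one (f : V → ZMod 2) :
    edgeCount (SimpleGraph.completeGraph V) f 1 = #{v | f v = 0} * #{v | f v = 1} := by
  rw [← card_product, edgeCount]
  symm
  apply card_bij (fun p _ => s(p.1, p.2))
  · rintro ⟨a, b⟩ hab
    simp only [mem_product, mem_filter, mem_univ, true_and] at hab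
    simp only [mem_filter, SimpleGraph.mem_edgeFinset, SimpleGraph.mem_edgeSet,
      SimpleGraph.completeGraph_eq_top, SimpleGraph.top_adj, Sym2.lift_mk, hab.1, hab.2, zero_add,
      and_true]
    rintro rfl
    exact zero_ne_one (hab.1.symm.trans hab.2)
  · rintro ⟨a, b⟩ hab ⟨a', b'⟩ hab' h
    simp only [mem_product, mem_filter, mem_univ, true_and] at hab hab'
    rcases Sym2.eq_iff.1 h with h | ⟨rfl, rfl⟩
    · exact Prod.ext h.1 h.2
    · exact absurd (hab.1.symm.trans hab'.2) zero_ne_one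
  · intro e he
    induction e with
    | _ a b =>
    simp only [mem_filter, SimpleGraph.mem_edgeFinset, SimpleGraph.mem_edgeSet, Sym2.lift_mk,
      ZMod.two_add_eq_one_iff] at he
    rcases he.2 with h | h
    · exact ⟨(a, b), by simpa using h, rfl⟩
    · exact ⟨(b, a), by simpa using h.symm, Sym2.eq_swap⟩

lemma two_mul_edgeCount_sub_completeGraph (f : V → ZMod 2) :
    2 * ((edgeCount (SimpleGraph.completeGraph V) f 0 : ℤ)
        - edgeCount (SimpleGraph.completeGraph V) f 1)
      = ((Fintype.card V : ℤ) - 2 * #{v | f v = 0}) ^ 2 - Fintype.card V := by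
  set n := Fintype.card V
  have hedges := congrArg (Nat.cast : ℕ → ℤ) <| (edgeCount_zero_add_edgeCount_one _ f).trans
    SimpleGraph.card_edgeFinset_top_eq_card_choose_two
  have hverts := congrArg (Nat.cast : ℕ → ℤ) (card_filter_eq_zero_add_card_filter_eq_one univ f)
  have hchoose : (2 * n.choose 2 : ℤ) = n * (n - 1) := by
    have : (2 * n.choose 2 : ℚ) = n * (n - 1) := by rw [Nat.cast_choose_two]; ring
    exact_mod_cast this
  rw [edgeCount_completeGraph_one] at hedges ⊢
  push_cast [card_univ] at hedges hverts ⊢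
  linear_combination 2 * hedges + hchoose - 4 * (#{v | f v = 0} : ℤ) * hverts

lemma abs_edgeCount_sub_le_one_iff {f : V → ZMod 2} {j : ℕ}
    (hj : (j : ℤ) = |(Fintype.card V : ℤ) - 2 * #{v | f v = 0}|) :
    |(edgeCount (SimpleGraph.completeGraph V) f 0 : ℤ)
        - edgeCount (SimpleGraph.completeGraph V) f 1| ≤ 1 ↔
      (Fintype.card V : ℤ) = (j : ℤ) ^ 2 - 2 ∨ (Fintype.card V : ℤ) = (j : ℤ) ^ 2
        ∨ (Fintype.card V : ℤ) = (j : ℤ) ^ 2 + 2 := by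
  have h := two_mul_edgeCount_sub_completeGraph f
  rw [← sq_abs, ← hj] at h
  rw [abs_le]
  generalize (j : ℤ) ^ 2 = s at h ⊢
  omega

lemma exists_card_filter_eq_zero {z : ℕ} (hz : z ≤ Fintype.card V) :
    ∃ f : V → ZMod 2, #{v | f v = 0} = z := by
  obtain ⟨s, -, hs⟩ := exists_subset_card_eq (s := (univ : Finset V)) hz
  exact ⟨fun v => if v ∈ s then 0 else 1, by simpa [apply_ite (· = (0 : ZMod 2))] using hs⟩

end

lemma exists_sub_two_mul_eq_of_eq_sq_add {n j : ℕ}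
    (h : (n : ℤ) = (j : ℤ) ^ 2 - 2 ∨ (n : ℤ) = (j : ℤ) ^ 2 ∨ (n : ℤ) = (j : ℤ) ^ 2 + 2) :
    ∃ z ≤ n, (n : ℤ) - 2 * z = j := by
  have hjn : j ≤ n := by
    rcases Nat.lt_or_ge j 2 with hj | hj
    · interval_cases j <;> simp at h <;> omega
    · have : (j : ℤ) + 2 ≤ j ^ 2 := by nlinarith
      generalize (j : ℤ) ^ 2 = s at h this
      omega
  obtain ⟨k, hk⟩ := Int.even_mul_pred_self (j : ℤ)
  refine ⟨(n - j) / 2, by omega, ?_⟩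
  rw [mul_sub, mul_one, ← sq] at hk
  generalize (j : ℤ) ^ 2 = s at h hk
  omega

theorem Kn_rough_edge_balance_iff (n : ℕ) :
    (∃ f : Fin n → ZMod 2,
      |(edgeCount (SimpleGraph.completeGraph (Fin n)) f 0 : ℤ)
        - (edgeCount (SimpleGraph.completeGraph (Fin n)) f 1 : ℤ)| ≤ 1)
    ↔ ∃ j : ℕ, (n : ℤ) = (j : ℤ) ^ 2 - 2 ∨ (n : ℤ) = (j : ℤ) ^ 2
        ∨ (n : ℤ) = (j : ℤ) ^ 2 + 2 := by
  constructor
  · rintro ⟨f, hf⟩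
    refine ⟨((n : ℤ) - 2 * #{v | f v = 0}).natAbs, ?_⟩
    simpa using (abs_edgeCount_sub_le_one_iff (Int.natCast_natAbs _)).1 hf
  · rintro ⟨j, hj⟩
    obtain ⟨z, hzn, hz⟩ := exists_sub_two_mul_eq_of_eq_sq_add hj
    obtain ⟨f, hf⟩ := exists_card_filter_eq_zero (V := Fin n) (by simpa using hzn)
    refine ⟨f, (abs_edgeCount_sub_le_one_iff ?_).2 (by simpa using hj)⟩
    rw [hf, Fintype.card_fin, hz, abs_of_nonneg (Int.natCast_nonneg j)]
end

section
/- If G₁ is a connected simple bipartite graph and G₂ is a simple graph with q edges, then the tensor product G₁ × G₂ can be decomposed into 2q edge-disjoint subgraphs each isomorphic to G₁, whose edge sets partition the edge set of G₁ × G₂. -/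
/-!
A proper 2-colouring `c` of `G₁` turns every dart `(a, b)` of `G₂` into a homomorphism
`G₁ →g G₂` sending one colour class to `a` and the other to `b`. The graph of any homomorphism
`φ : G₁ →g G₂` spans an induced copy of `G₁` in `G₁ × G₂`. An edge `(u, a) ~ (v, b)` of the
product, with `c u = 0` say, lies on the copy of the dart `(a, b)` and on no other, so the `2q`
copies partition the edges.
-/

/-- The tensor (categorical) product of two simple graphs. -/
def tensorProd {α β : Type*} (G : SimpleGraph α) (H : SimpleGraph β) :
    SimpleGraph (α × β) where
  Adj x y := G.Adj x.1 y.1 ∧ H.Adj x.2 y.2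
  symm := ⟨fun _ _ h => ⟨h.1.symm, h.2.symm⟩⟩
  loopless := ⟨fun x h => G.irrefl h.1⟩

namespace SimpleGraph

variable {α β : Type*} {G : SimpleGraph α} {H : SimpleGraph β}

def Hom.graphEmbedding (φ : G →g H) : G ↪g tensorProd G H where
  toFun v := (v, φ v)
  inj' _ _ h := congrArg Prod.fst h
  map_rel_iff' := ⟨And.left, fun h => ⟨h, φ.map_adj h⟩⟩

def Hom.graphSubgraph (φ : G →g H) : (tensorProd G H).Subgraph :=
  (⊤ : (tensorProd G H).Subgraph).induce (Set.range φ.graphEmbedding)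

theorem Hom.nonempty_graphSubgraph_coe_iso (φ : G →g H) :
    Nonempty (φ.graphSubgraph.coe ≃g G) := by
  rw [Hom.graphSubgraph, ← induce_eq_coe_induce_top]
  exact ⟨φ.graphEmbedding.isoInduceRange.symm⟩

theorem Hom.mem_edgeSet_graphSubgraph (φ : G →g H) {x y : α × β} :
    s(x, y) ∈ φ.graphSubgraph.edgeSet ↔
      (tensorProd G H).Adj x y ∧ x.2 = φ x.1 ∧ y.2 = φ y.1 := by
  have mem_range : ∀ z : α × β, z ∈ Set.range φ.graphEmbedding ↔ z.2 = φ z.1 := fun z =>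
    ⟨by rintro ⟨v, rfl⟩; rfl, fun h => ⟨z.1, Prod.ext rfl h.symm⟩⟩
  simp only [Hom.graphSubgraph, Subgraph.mem_edgeSet, Subgraph.induce_adj, Subgraph.top_adj,
    mem_range]
  tauto

theorem Coloring.ne_zero_iff_eq_zero_of_adj (c : G.Coloring (Fin 2)) {u v : α}
    (h : G.Adj u v) : c u ≠ 0 ↔ c v = 0 := by
  have := c.valid h
  omega

def Coloring.dartHom (c : G.Coloring (Fin 2)) (d : H.Dart) : G →g H where
  toFun v := if c v = 0 then d.fst else d.snd
  map_rel' {u v} h := by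
    by_cases hu : c u = 0
    · simp [hu, (c.ne_zero_iff_eq_zero_of_adj h.symm).mpr hu]
    · simpa [hu, (c.ne_zero_iff_eq_zero_of_adj h).mp hu] using d.adj.symm

theorem Coloring.dartHom_apply (c : G.Coloring (Fin 2)) (d : H.Dart) (v : α) :
    c.dartHom d v = if c v = 0 then d.fst else d.snd :=
  rfl

theorem Coloring.existsUnique_dart_mem_edgeSet_graphSubgraph (c : G.Coloring (Fin 2))
    {e : Sym2 (α × β)} (he : e ∈ (tensorProd G H).edgeSet) :
    ∃! d : H.Dart, e ∈ (c.dartHom d).graphSubgraph.edgeSet := by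
  induction e using Sym2.ind with | h x y => ?_
  have h : (tensorProd G H).Adj x y := he
  simp only [Hom.mem_edgeSet_graphSubgraph, h, true_and, c.dartHom_apply]
  by_cases hx : c x.1 = 0
  · have hy : c y.1 ≠ 0 := (c.ne_zero_iff_eq_zero_of_adj h.1.symm).mpr hx
    refine ⟨⟨(x.2, y.2), h.2⟩, by simp [hx, hy], fun d hd => ?_⟩
    simp only [hx, hy, if_true, if_false] at hd
    exact Dart.ext _ _ (Prod.ext hd.1.symm hd.2.symm)
  · have hy : c y.1 = 0 := (c.ne_zero_iff_eq_zero_of_adj h.1).mp hx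
    refine ⟨⟨(y.2, x.2), h.2.symm⟩, by simp [hx, hy], fun d hd => ?_⟩
    simp only [hx, hy, if_true, if_false] at hd
    exact Dart.ext _ _ (Prod.ext hd.2.symm hd.1.symm)

end SimpleGraph

theorem tensor_product_decomposition_general
    {V₁ V₂ : Type*} [Fintype V₂] [DecidableEq V₂]
    (G₁ : SimpleGraph V₁) (G₂ : SimpleGraph V₂) [DecidableRel G₂.Adj]
    (hbip : G₁.Colorable 2)
    (q : ℕ) (hq : q = G₂.edgeFinset.card) :
    ∃ H : Fin (2 * q) → (tensorProd G₁ G₂).Subgraph,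
      (∀ i, Nonempty ((H i).coe ≃g G₁)) ∧
      (∀ i j, i ≠ j → Disjoint (H i).edgeSet (H j).edgeSet) ∧
      (⋃ i, (H i).edgeSet) = (tensorProd G₁ G₂).edgeSet := by
  obtain ⟨c⟩ := hbip
  let darts : Fin (2 * q) ≃ G₂.Dart :=
    (Fintype.equivFinOfCardEq (by rw [hq, SimpleGraph.dart_card_eq_twice_card_edges])).symm
  refine ⟨fun i => (c.dartHom (darts i)).graphSubgraph,
    fun i => (c.dartHom (darts i)).nonempty_graphSubgraph_coe_iso, fun i j hij => ?_, ?_⟩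
  · refine Set.disjoint_left.mpr fun s hi hj => hij (darts.injective ?_)
    exact (c.existsUnique_dart_mem_edgeSet_graphSubgraph
      (SimpleGraph.Subgraph.edgeSet_subset _ hi)).unique hi hj
  · refine (Set.iUnion_subset fun i => SimpleGraph.Subgraph.edgeSet_subset _).antisymm
      fun s hs => ?_
    obtain ⟨d, hd, -⟩ := c.existsUnique_dart_mem_edgeSet_graphSubgraph hs
    exact Set.mem_iUnion.mpr ⟨darts.symm d, by simpa using hd⟩

theorem tensor_product_decomposition
    {V₁ V₂ : Type*} [Fintype V₁] [Fintype V₂] [DecidableEq V₁] [DecidableEq V₂]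
    (G₁ : SimpleGraph V₁) (G₂ : SimpleGraph V₂) [DecidableRel G₂.Adj]
    (hconn : G₁.Connected) (hbip : G₁.Colorable 2)
    (q : ℕ) (hq : q = G₂.edgeFinset.card) :
    ∃ H : Fin (2 * q) → (tensorProd G₁ G₂).Subgraph,
      (∀ i, Nonempty ((H i).coe ≃g G₁)) ∧
      (∀ i j, i ≠ j → Disjoint (H i).edgeSet (H j).edgeSet) ∧
      (⋃ i, (H i).edgeSet) = (tensorProd G₁ G₂).edgeSet :=
  tensor_product_decomposition_general G₁ G₂ hbip q hq
end
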